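/- Let T ≥ 1 be a natural number, let B ≥ 0, and let h_1, …, h_T, h_{T+1} be vectors in ℝ^d with ‖h_t‖ ≤ B for every t ∈ {1, …, T+1}. Define the empirical covariance Σ = (1/T)·∑_{t=1}^T (h_t − h̄)(h_t − h̄)ᵀ with h̄ = (1/T)·∑_{t=1}^T h_t, and let Σ' be the analogous covariance over all T+1 vectors with mean h̄'. Then ‖Σ' − Σ‖_F ≤ 6B²/(T+1). -/

import Mathlib

/-- The outer product `a bᵀ` of two vectors in `ℝ^d`, as a `d × d` matrix. -/
def outerProd {d : ℕ} (a b : EuclideanSpace ℝ (Fin d)) :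
    Matrix (Fin d) (Fin d) ℝ :=
  Matrix.of fun i j => a i * b j

/-- The Frobenius norm of a `d × d` real matrix. -/
noncomputable def frobNorm {d : ℕ} (M : Matrix (Fin d) (Fin d) ℝ) : ℝ :=
  Real.sqrt (∑ i, ∑ j, (M i j) ^ 2)

/-- The empirical covariance `(1/T)·∑_{t=1}^T (h_t − h̄)(h_t − h̄)ᵀ` of the
vectors `h 1, …, h T`. -/
noncomputable def empCov {d : ℕ} (T : ℕ) (h : ℕ → EuclideanSpace ℝ (Fin d)) :
    Matrix (Fin d) (Fin d) ℝ :=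
  (T : ℝ)⁻¹ • ∑ t ∈ Finset.Icc 1 T,
    outerProd (h t - (T : ℝ)⁻¹ • ∑ s ∈ Finset.Icc 1 T, h s)
      (h t - (T : ℝ)⁻¹ • ∑ s ∈ Finset.Icc 1 T, h s)

/-! If `m_T` is the mean of the first `T` terms of a family bounded by `C`, then
`m_{T+1} - m_T = (f_{T+1} - m_T)/(T+1)` has norm at most `2C/(T+1)`. Apply this to the vectors
(`C = B`) and to their second moments `h_t h_tᵀ` (`C = B²`), and write `Σ = M - h̄h̄ᵀ`, where
`h̄'h̄'ᵀ - h̄h̄ᵀ = h̄'(h̄' - h̄)ᵀ + (h̄' - h̄)h̄ᵀ` has norm at most `2B · 2B/(T+1)`;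
altogether `(2 + 4)B²/(T+1)`. -/

attribute [local instance] Matrix.frobeniusNormedAddCommGroup Matrix.frobeniusNormedSpace

open Finset

section Mean

variable {E F : Type*} [AddCommGroup E] [Module ℝ E] [AddCommGroup F] [Module ℝ F]

-- `mean 0 f = 0` since `(0 : ℝ)⁻¹ = 0`, so the identities below need no `T ≠ 0`.
noncomputable def mean (T : ℕ) (f : ℕ → E) : E :=
  (T : ℝ)⁻¹ • ∑ t ∈ Icc 1 T, f t

lemma natCast_smul_mean (T : ℕ) (f : ℕ → E) : (T : ℝ) • mean T f = ∑ t ∈ Icc 1 T, f t := by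
  rcases eq_or_ne T 0 with rfl | hT
  · simp
  · exact smul_inv_smul₀ (Nat.cast_ne_zero.mpr hT) _

lemma mean_succ_sub_mean (T : ℕ) (f : ℕ → E) :
    mean (T + 1) f - mean T f = ((T : ℝ) + 1)⁻¹ • (f (T + 1) - mean T f) := by
  have hT : ((T : ℝ) + 1) ≠ 0 := by positivity
  rw [mean, sum_Icc_succ_top (by omega), ← natCast_smul_mean, Nat.cast_succ]
  match_scalars
  · field_simp
    ring
  · field_simp

lemma mean_sub (T : ℕ) (f g : ℕ → E) :
    mean T (fun t => f t - g t) = mean T f - mean T g := by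
  simp [mean, sum_sub_distrib, smul_sub]

lemma map_mean (L : E →ₗ[ℝ] F) (T : ℕ) (f : ℕ → E) :
    L (mean T f) = mean T (fun t => L (f t)) := by
  simp [mean, map_sum]

lemma mean_const {T : ℕ} (hT : T ≠ 0) (x : E) : mean T (fun _ => x) = x := by
  rw [mean, sum_const, Nat.card_Icc, Nat.add_sub_cancel, ← Nat.cast_smul_eq_nsmul ℝ,
    inv_smul_smul₀ (Nat.cast_ne_zero.mpr hT)]

lemma mean_bilin_sub_mean (β : E →ₗ[ℝ] E →ₗ[ℝ] F) (T : ℕ) (x : ℕ → E) :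
    mean T (fun t => β (x t - mean T x) (x t - mean T x)) =
      mean T (fun t => β (x t) (x t)) - β (mean T x) (mean T x) := by
  rcases eq_or_ne T 0 with rfl | hT
  · simp [mean]
  set m := mean T x
  have hβm : ∀ t, β (x t - m) (x t - m) = (β (x t) (x t) - β m (x t)) - (β (x t) m - β m m) := by
    intro t; simp only [map_sub, LinearMap.sub_apply]
  have hleft : mean T (fun t => β m (x t)) = β m m := (map_mean (β m) T x).symm
  have hright : mean T (fun t => β (x t) m) = β m m := (map_mean (β.flip m) T x).symm
  simp only [hβm, mean_sub, hleft, hright, mean_const hT, sub_self, sub_zero]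

end Mean

section NormedMean

variable {E : Type*} [SeminormedAddCommGroup E] [NormedSpace ℝ E]

lemma norm_mean_le {T : ℕ} {f : ℕ → E} {C : ℝ} (hC : 0 ≤ C)
    (hf : ∀ t ∈ Icc 1 T, ‖f t‖ ≤ C) : ‖mean T f‖ ≤ C := by
  rcases eq_or_ne T 0 with rfl | hT
  · simpa [mean] using hC
  calc ‖mean T f‖ = (T : ℝ)⁻¹ * ‖∑ t ∈ Icc 1 T, f t‖ := by
        rw [mean, norm_smul, Real.norm_of_nonneg (by positivity)]
    _ ≤ (T : ℝ)⁻¹ * (T * C) := by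
        gcongr
        simpa using norm_sum_le_of_le _ hf
    _ = C := by field_simp

lemma norm_mean_succ_sub_mean_le {T : ℕ} {f : ℕ → E} {C : ℝ} (hC : 0 ≤ C)
    (hf : ∀ t ∈ Icc 1 (T + 1), ‖f t‖ ≤ C) :
    ‖mean (T + 1) f - mean T f‖ ≤ 2 * C / ((T : ℝ) + 1) := by
  have hlast : ‖f (T + 1)‖ ≤ C := hf (T + 1) (by simp)
  have hprefix : ‖mean T f‖ ≤ C :=
    norm_mean_le hC fun t ht => hf t (Icc_subset_Icc_right (by omega) ht)
  rw [mean_succ_sub_mean, norm_smul, Real.norm_of_nonneg (by positivity), ← div_eq_inv_mul]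
  gcongr
  linarith [norm_sub_le (f (T + 1)) (mean T f)]

end NormedMean

section OuterProd

variable {d : ℕ}

lemma frobNorm_eq_norm (M : Matrix (Fin d) (Fin d) ℝ) : frobNorm M = ‖M‖ := by
  rw [Matrix.frobenius_norm_def, frobNorm, Real.sqrt_eq_rpow]
  simp [Real.norm_eq_abs, sq_abs]

def outerProdBilin :
    EuclideanSpace ℝ (Fin d) →ₗ[ℝ] EuclideanSpace ℝ (Fin d) →ₗ[ℝ] Matrix (Fin d) (Fin d) ℝ :=
  (vecMulVecBilin ℝ ℝ).compl₁₂ (WithLp.linearEquiv 2 ℝ (Fin d → ℝ)).toLinearMap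
    (WithLp.linearEquiv 2 ℝ (Fin d → ℝ)).toLinearMap

lemma outerProdBilin_apply (a b : EuclideanSpace ℝ (Fin d)) :
    outerProdBilin a b = outerProd a b := rfl

lemma norm_outerProd_le (a b : EuclideanSpace ℝ (Fin d)) : ‖outerProd a b‖ ≤ ‖a‖ * ‖b‖ := by
  have h :=
    Matrix.frobenius_norm_mul (Matrix.replicateCol Unit a.ofLp) (Matrix.replicateRow Unit b.ofLp)
  rwa [← Matrix.vecMulVec_eq, Matrix.frobenius_norm_replicateCol,
    Matrix.frobenius_norm_replicateRow] at h

lemma norm_outerProd_self_sub_le (a b : EuclideanSpace ℝ (Fin d)) :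
    ‖outerProd a a - outerProd b b‖ ≤ (‖a‖ + ‖b‖) * ‖a - b‖ := by
  have h : outerProd a a - outerProd b b = outerProd a (a - b) + outerProd (a - b) b := by
    simp only [← outerProdBilin_apply, map_sub, LinearMap.sub_apply]
    abel
  calc ‖outerProd a a - outerProd b b‖
      ≤ ‖outerProd a (a - b)‖ + ‖outerProd (a - b) b‖ := h ▸ norm_add_le _ _
    _ ≤ ‖a‖ * ‖a - b‖ + ‖a - b‖ * ‖b‖ :=
        add_le_add (norm_outerProd_le _ _) (norm_outerProd_le _ _)
    _ = (‖a‖ + ‖b‖) * ‖a - b‖ := by ring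

lemma empCov_eq_mean_sub_outerProd (T : ℕ) (h : ℕ → EuclideanSpace ℝ (Fin d)) :
    empCov T h = mean T (fun t => outerProd (h t) (h t)) - outerProd (mean T h) (mean T h) :=
  mean_bilin_sub_mean outerProdBilin T h

end OuterProd

theorem empCov_shift_le_general (d T : ℕ) (B : ℝ) (hB : 0 ≤ B)
    (h : ℕ → EuclideanSpace ℝ (Fin d))
    (hbound : ∀ t ∈ Finset.Icc 1 (T + 1), ‖h t‖ ≤ B) :
    frobNorm (empCov (T + 1) h - empCov T h) ≤ 6 * B ^ 2 / ((T : ℝ) + 1) := by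
  have hmean : ‖mean (T + 1) h - mean T h‖ ≤ 2 * B / ((T : ℝ) + 1) :=
    norm_mean_succ_sub_mean_le hB hbound
  have hsecond : ‖mean (T + 1) (fun t => outerProd (h t) (h t)) -
      mean T (fun t => outerProd (h t) (h t))‖ ≤ 2 * B ^ 2 / ((T : ℝ) + 1) :=
    norm_mean_succ_sub_mean_le (by positivity) fun t ht =>
      (norm_outerProd_le _ _).trans (by nlinarith [hbound t ht, norm_nonneg (h t)])
  have hprefix : ‖mean T h‖ ≤ B :=
    norm_mean_le hB fun t ht => hbound t (Icc_subset_Icc_right (by omega) ht)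
  have hfull : ‖mean (T + 1) h‖ ≤ B := norm_mean_le hB hbound
  have hcorr : ‖outerProd (mean (T + 1) h) (mean (T + 1) h) - outerProd (mean T h) (mean T h)‖
      ≤ (B + B) * (2 * B / ((T : ℝ) + 1)) :=
    (norm_outerProd_self_sub_le _ _).trans (by gcongr)
  rw [frobNorm_eq_norm, empCov_eq_mean_sub_outerProd, empCov_eq_mean_sub_outerProd,
    sub_sub_sub_comm]
  calc _ ≤ 2 * B ^ 2 / ((T : ℝ) + 1) + (B + B) * (2 * B / ((T : ℝ) + 1)) :=
        (norm_sub_le _ _).trans (add_le_add hsecond hcorr)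
    _ = 6 * B ^ 2 / ((T : ℝ) + 1) := by ring

/-- Corollary 1: appending one vector changes the empirical
covariance by at most `6B²/(T+1)` in Frobenius norm. -/
theorem empCov_shift_le (d T : ℕ) (hT : 1 ≤ T) (B : ℝ) (hB : 0 ≤ B)
    (h : ℕ → EuclideanSpace ℝ (Fin d))
    (hbound : ∀ t ∈ Finset.Icc 1 (T + 1), ‖h t‖ ≤ B) :
    frobNorm (empCov (T + 1) h - empCov T h) ≤ 6 * B ^ 2 / ((T : ℝ) + 1) :=
  empCov_shift_le_general d T B hB h hbound
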